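/- Let $w^* \in L^2(D)$, let $U : L^2(D) \to C(\bar{D})$ be a linear operator that is strictly positivity-improving (it takes nonzero nonnegative functions to strictly positive functions), and let $\tilde{w}^*$ satisfy $\int_D u\,\tilde{w}^*\,dx > 0$ for all nonzero nonnegative continuous $u$. Suppose $U^* \tilde{w}^* = d^* w^*$ with $d^* > 0$. Then $w^*(x) > 0$ for a.e. $x \in D$. -/

import Mathlib

open MeasureTheory

/-- Positivity of the adjoint principal functional (from the proof of Theorem 4.2):
if a strictly positivity-improving linear operator `U` (with continuous images) and
functionals `w*`, `w̃*` satisfy the duality relation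
`∫ (Uv)·w̃* = d*·∫ v·w*` with `d* > 0`, where `w̃*` is strictly positive against
nonzero nonnegative continuous functions, and `w*` is not a.e. zero, then
`w* > 0` a.e. on `D`. -/
theorem adjoint_principal_functional_positive
    {N : ℕ} (D : Set (EuclideanSpace ℝ (Fin N)))
    (hDopen : IsOpen D) (hDbdd : Bornology.IsBounded D)
    (U : (EuclideanSpace ℝ (Fin N) → ℝ) →ₗ[ℝ] (EuclideanSpace ℝ (Fin N) → ℝ))
    (wstar twstar : EuclideanSpace ℝ (Fin N) → ℝ)
    (dstar : ℝ) (hdstar : 0 < dstar)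
    (hwstarL2 : MemLp wstar 2 (volume.restrict D))
    (htwstarL2 : MemLp twstar 2 (volume.restrict D))
    (hUcont : ∀ v, MemLp v 2 (volume.restrict D) → Continuous (U v))
    (hUL2 : ∀ v, MemLp v 2 (volume.restrict D) → MemLp (U v) 2 (volume.restrict D))
    (hUpos : ∀ v, MemLp v 2 (volume.restrict D) →
      (∀ᵐ x ∂(volume.restrict D), 0 ≤ v x) →
      ¬ (∀ᵐ x ∂(volume.restrict D), v x = 0) →
      ∀ x ∈ D, 0 < U v x)
    (htwpos : ∀ u : EuclideanSpace ℝ (Fin N) → ℝ, Continuous u →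
      (∀ x, 0 ≤ u x) → (∃ x ∈ D, u x ≠ 0) →
      0 < ∫ x in D, u x * twstar x)
    (hdual : ∀ v, MemLp v 2 (volume.restrict D) →
      ∫ x in D, U v x * twstar x = dstar * ∫ x in D, v x * wstar x)
    (hwne : ¬ (∀ᵐ x ∂(volume.restrict D), wstar x = 0)) :
    ∀ᵐ x ∂(volume.restrict D), 0 < wstar x := by
  set μ := volume.restrict D with hμ
  have hDne : D.Nonempty := by
    rcases D.eq_empty_or_nonempty with h | h
    · exfalso; apply hwne; rw [hμ, h]; simp
    · exact h
  haveI hfin : IsFiniteMeasure μ := ⟨by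
    rw [Measure.restrict_apply_univ]; exact hDbdd.measure_lt_top⟩
  -- Key positivity lemma
  have key : ∀ v, MemLp v 2 μ → (∀ᵐ x ∂μ, 0 ≤ v x) →
      ¬(∀ᵐ x ∂μ, v x = 0) → 0 < ∫ x in D, U v x * twstar x := by
    intro v hv hv0 hvne
    have hUv : ∀ x ∈ D, 0 < U v x := hUpos v hv hv0 hvne
    have hcont : Continuous (fun x => max (U v x) 0) :=
      (hUcont v hv).max continuous_const
    have h1 : 0 < ∫ x in D, max (U v x) 0 * twstar x := by
      apply htwpos _ hcont (fun x => le_max_right _ _)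
      obtain ⟨x₀, hx₀⟩ := hDne
      exact ⟨x₀, hx₀, ne_of_gt (lt_of_lt_of_le (hUv x₀ hx₀) (le_max_left _ _))⟩
    have h2 : ∫ x in D, max (U v x) 0 * twstar x = ∫ x in D, U v x * twstar x :=
      setIntegral_congr_fun hDopen.measurableSet
        (fun x hx => by rw [max_eq_left (hUv x hx).le])
    linarith
  -- Step 1: wstar ≥ 0 a.e.
  have hge : ∀ᵐ x ∂μ, 0 ≤ wstar x := by
    by_contra hneg
    have hvL2 : MemLp (fun x => max (-wstar x) 0) 2 μ := hwstarL2.neg.pos_part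
    have hv0 : ∀ᵐ x ∂μ, 0 ≤ max (-wstar x) 0 :=
      Filter.Eventually.of_forall fun x => le_max_right _ _
    have hvne : ¬ (∀ᵐ x ∂μ, max (-wstar x) 0 = 0) := by
      intro h
      apply hneg
      filter_upwards [h] with x hx
      have : -wstar x ≤ 0 := by
        by_contra hc
        push_neg at hc
        rw [max_eq_left hc.le] at hx
        linarith
      linarith
    have hI := key _ hvL2 hv0 hvne
    rw [hdual _ hvL2] at hI
    have hle : ∀ x, max (-wstar x) 0 * wstar x ≤ 0 := by
      intro x
      rcases le_or_gt (wstar x) 0 with h | h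
      · nlinarith [le_max_right (-wstar x) (0:ℝ)]
      · rw [max_eq_right (by linarith : -wstar x ≤ 0)]; simp
    have h2 : ∫ x in D, max (-wstar x) 0 * wstar x ≤ 0 := integral_nonpos hle
    nlinarith
  -- Step 2: the zero set is null
  obtain ⟨g, hgmeas, hgae⟩ := hwstarL2.1
  by_contra hneg
  set v : EuclideanSpace ℝ (Fin N) → ℝ := fun x => if g x ≤ 0 then 1 else 0 with hvdef
  have hvmeas : Measurable v :=
    Measurable.ite (measurableSet_le hgmeas.measurable measurable_const)
      measurable_const measurable_const
  have hvL2 : MemLp v 2 μ := by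
    apply MemLp.of_bound hvmeas.aestronglyMeasurable 1
    apply Filter.Eventually.of_forall
    intro x
    simp only [hvdef]
    split <;> simp
  have hv0 : ∀ᵐ x ∂μ, 0 ≤ v x := by
    apply Filter.Eventually.of_forall
    intro x
    simp only [hvdef]
    split <;> norm_num
  have hvne : ¬ (∀ᵐ x ∂μ, v x = 0) := by
    intro h
    apply hneg
    filter_upwards [h, hgae] with x hx hgx
    rw [hgx]
    by_contra hle
    push_neg at hle
    simp only [hvdef, if_pos hle] at hx
    exact one_ne_zero hx
  have hz : (fun x => v x * wstar x) =ᵐ[μ] 0 := by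
    filter_upwards [hge, hgae] with x hx hgx
    by_cases hgle : g x ≤ 0
    · have hw0 : wstar x = 0 := le_antisymm (hgx ▸ hgle) hx
      simp [hw0]
    · simp [hvdef, if_neg hgle]
  have h0 : ∫ x in D, v x * wstar x = 0 := integral_eq_zero_of_ae hz
  have hI := key v hvL2 hv0 hvne
  rw [hdual v hvL2, h0, mul_zero] at hI
  exact lt_irrefl 0 hI
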